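/- Let P, Q be symmetric positive definite n×n real matrices and σ > 0. If x, e ∈ ℝⁿ and u, u_safe ∈ ℝᵐ satisfy the triggering bound 2 xᵀ P B K e ≤ σ xᵀ P x and the safety-gate condition 2 xᵀ P B (u - u_safe) < σ xᵀ P x, then -xᵀ Q x + 2 xᵀ P B K e + 2 xᵀ P B (u - u_safe) < -(λ_min(Q) - 2 σ λ_max(P)) ‖x‖² + σ xᵀ P x - σ xᵀ P x ≤ -(λ_min(Q) - 2 σ λ_max(P)) ‖x‖²; in particular, if σ < λ_min(Q)/(2 λ_max(P)), this quantity is strictly negative for every x ≠ 0. -/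

import Mathlib

/-! Diagonalizing a symmetric matrix in an orthonormal eigenbasis gives the Rayleigh bounds
`λ_min(Q) ‖x‖² ≤ xᵀQx` and `xᵀPx ≤ λ_max(P) ‖x‖²`; with these, the triggering and gate
conditions each contribute at most `σ λ_max(P) ‖x‖²` against the `-λ_min(Q) ‖x‖²` of `-xᵀQx`. -/

open Matrix

lemma Matrix.dotProduct_mulVec_mul_diagonal_mul_transpose {ι : Type*} [Fintype ι] [DecidableEq ι]
    (U : Matrix ι ι ℝ) (d : ι → ℝ) (x : ι → ℝ) :
    x ⬝ᵥ ((U * diagonal d * Uᵀ) *ᵥ x) = ∑ i, d i * (Uᵀ *ᵥ x) i ^ 2 := by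
  rw [← mulVec_mulVec, ← mulVec_mulVec, dotProduct_mulVec, ← mulVec_transpose]
  simp only [dotProduct, mulVec_diagonal]
  exact Finset.sum_congr rfl fun i _ => by ring

namespace Matrix.IsHermitian

variable {ι : Type*} [Fintype ι] [DecidableEq ι] {M : Matrix ι ι ℝ} (hM : M.IsHermitian)

lemma dotProduct_mulVec_self_eq_sum_eigenvalues (x : ι → ℝ) :
    x ⬝ᵥ (M *ᵥ x) =
      ∑ i, hM.eigenvalues i * ((hM.eigenvectorUnitary : Matrix ι ι ℝ)ᵀ *ᵥ x) i ^ 2 := by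
  conv_lhs => rw [hM.spectral_theorem, Unitary.conjStarAlgAut_apply, star_eq_conjTranspose,
    conjTranspose_eq_transpose_of_trivial]
  exact dotProduct_mulVec_mul_diagonal_mul_transpose _ _ x

lemma dotProduct_self_eq_sum_sq (x : ι → ℝ) :
    x ⬝ᵥ x = ∑ i, ((hM.eigenvectorUnitary : Matrix ι ι ℝ)ᵀ *ᵥ x) i ^ 2 := by
  set U : Matrix ι ι ℝ := (hM.eigenvectorUnitary : Matrix ι ι ℝ)
  have hU : U * Uᵀ = 1 := by
    rw [← conjTranspose_eq_transpose_of_trivial, ← star_eq_conjTranspose]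
    exact Unitary.mul_star_self_of_mem hM.eigenvectorUnitary.2
  simpa [hU] using dotProduct_mulVec_mul_diagonal_mul_transpose U 1 x

lemma iInf_eigenvalues_mul_le_dotProduct_mulVec (x : ι → ℝ) :
    (⨅ i, hM.eigenvalues i) * (x ⬝ᵥ x) ≤ x ⬝ᵥ (M *ᵥ x) := by
  rw [hM.dotProduct_mulVec_self_eq_sum_eigenvalues, hM.dotProduct_self_eq_sum_sq, Finset.mul_sum]
  gcongr with i
  exact ciInf_le (Set.finite_range _).bddBelow i

lemma dotProduct_mulVec_le_iSup_eigenvalues_mul (x : ι → ℝ) :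
    x ⬝ᵥ (M *ᵥ x) ≤ (⨆ i, hM.eigenvalues i) * (x ⬝ᵥ x) := by
  rw [hM.dotProduct_mulVec_self_eq_sum_eigenvalues, hM.dotProduct_self_eq_sum_sq, Finset.mul_sum]
  gcongr with i
  exact le_ciSup (Set.finite_range _).bddAbove i

end Matrix.IsHermitian

lemma Matrix.PosDef.iSup_eigenvalues_pos {ι : Type*} [Fintype ι] [DecidableEq ι] [Nonempty ι]
    {M : Matrix ι ι ℝ} (hM : M.PosDef) : 0 < ⨆ i, hM.isHermitian.eigenvalues i :=
  let i := Classical.arbitrary ι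
  (hM.eigenvalues_pos i).trans_le (le_ciSup (Set.finite_range _).bddAbove i)

lemma EuclideanSpace.real_norm_sq_eq_dotProduct {ι : Type*} [Fintype ι]
    (x : EuclideanSpace ℝ ι) :
    ‖x‖ ^ 2 = x ⬝ᵥ (x : ι → ℝ) := by
  simp [EuclideanSpace.real_norm_sq_eq, dotProduct, ← sq]

theorem safety_gate_decay_bound_general {n m : ℕ}
    (B : Matrix (Fin n) (Fin m) ℝ)
    (K : Matrix (Fin m) (Fin n) ℝ) (P Q : Matrix (Fin n) (Fin n) ℝ)
    (hP : P.PosDef) (hQ : Q.PosDef) (σ : ℝ) (hσ : 0 < σ)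
    (x : EuclideanSpace ℝ (Fin n)) (e : EuclideanSpace ℝ (Fin n))
    (u usafe : Fin m → ℝ)
    (htrig : 2 * (x ⬝ᵥ ((P * B * K) *ᵥ e)) ≤ σ * (x ⬝ᵥ (P *ᵥ x)))
    (hgate : 2 * (x ⬝ᵥ ((P * B) *ᵥ (u - usafe))) < σ * (x ⬝ᵥ (P *ᵥ x))) :
    let lminQ : ℝ := ⨅ i, hQ.isHermitian.eigenvalues i
    let lmaxP : ℝ := ⨆ i, hP.isHermitian.eigenvalues i
    let Vdot : ℝ := -(x ⬝ᵥ (Q *ᵥ x)) + 2 * (x ⬝ᵥ ((P * B * K) *ᵥ e))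
      + 2 * (x ⬝ᵥ ((P * B) *ᵥ (u - usafe)))
    (Vdot < -(lminQ - 2 * σ * lmaxP) * ‖x‖ ^ 2
        + σ * (x ⬝ᵥ (P *ᵥ x)) - σ * (x ⬝ᵥ (P *ᵥ x))) ∧
    (-(lminQ - 2 * σ * lmaxP) * ‖x‖ ^ 2 + σ * (x ⬝ᵥ (P *ᵥ x)) - σ * (x ⬝ᵥ (P *ᵥ x))
        ≤ -(lminQ - 2 * σ * lmaxP) * ‖x‖ ^ 2) ∧
    (σ < lminQ / (2 * lmaxP) → x ≠ 0 → Vdot < 0) := by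
  intro lminQ lmaxP Vdot
  have hnorm := EuclideanSpace.real_norm_sq_eq_dotProduct x
  have hQx : lminQ * ‖x‖ ^ 2 ≤ x ⬝ᵥ (Q *ᵥ x) :=
    hnorm ▸ hQ.isHermitian.iInf_eigenvalues_mul_le_dotProduct_mulVec x
  have hPx : σ * (x ⬝ᵥ (P *ᵥ x)) ≤ σ * (lmaxP * ‖x‖ ^ 2) :=
    mul_le_mul_of_nonneg_left (hnorm ▸ hP.isHermitian.dotProduct_mulVec_le_iSup_eigenvalues_mul x)
      hσ.le
  have hdecay : Vdot < -(lminQ - 2 * σ * lmaxP) * ‖x‖ ^ 2 := by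
    simp only [Vdot]
    linarith
  refine ⟨by linarith, by linarith, fun hσ_small hx => ?_⟩
  have : Nonempty (Fin n) := by
    by_contra h
    exact hx (PiLp.ext fun i => (h ⟨i⟩).elim)
  have hgap : 2 * σ * lmaxP < lminQ := by
    have hlmaxP : 0 < 2 * lmaxP := by linarith [hP.iSup_eigenvalues_pos]
    linarith [(lt_div_iff₀ hlmaxP).mp hσ_small]
  have hx_pos : 0 < ‖x‖ ^ 2 := by positivity
  exact hdecay.trans (mul_neg_of_neg_of_pos (neg_neg_of_pos (sub_pos.2 hgap)) hx_pos)

/-- **Lyapunov Safety Gate decay bound.**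
If the triggering bound `2 xᵀ P B K e ≤ σ xᵀ P x` and the safety-gate condition
`2 xᵀ P B (u - u_safe) < σ xᵀ P x` hold, then the Lyapunov derivative satisfies
`-xᵀ Q x + 2 xᵀ P B K e + 2 xᵀ P B (u - u_safe)
   < -(λ_min(Q) - 2 σ λ_max(P)) ‖x‖² + σ xᵀ P x - σ xᵀ P x
   ≤ -(λ_min(Q) - 2 σ λ_max(P)) ‖x‖²`;
in particular, if `σ < λ_min(Q)/(2 λ_max(P))` it is strictly negative for `x ≠ 0`. -/
theorem safety_gate_decay_bound {n m : ℕ}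
    (A : Matrix (Fin n) (Fin n) ℝ) (B : Matrix (Fin n) (Fin m) ℝ)
    (K : Matrix (Fin m) (Fin n) ℝ) (P Q : Matrix (Fin n) (Fin n) ℝ)
    (hP : P.PosDef) (hQ : Q.PosDef) (σ : ℝ) (hσ : 0 < σ)
    (x : EuclideanSpace ℝ (Fin n)) (e : EuclideanSpace ℝ (Fin n))
    (u usafe : Fin m → ℝ)
    (htrig : 2 * (x ⬝ᵥ ((P * B * K) *ᵥ e)) ≤ σ * (x ⬝ᵥ (P *ᵥ x)))
    (hgate : 2 * (x ⬝ᵥ ((P * B) *ᵥ (u - usafe))) < σ * (x ⬝ᵥ (P *ᵥ x))) :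
    let lminQ : ℝ := ⨅ i, hQ.isHermitian.eigenvalues i
    let lmaxP : ℝ := ⨆ i, hP.isHermitian.eigenvalues i
    let Vdot : ℝ := -(x ⬝ᵥ (Q *ᵥ x)) + 2 * (x ⬝ᵥ ((P * B * K) *ᵥ e))
      + 2 * (x ⬝ᵥ ((P * B) *ᵥ (u - usafe)))
    (Vdot < -(lminQ - 2 * σ * lmaxP) * ‖x‖ ^ 2
        + σ * (x ⬝ᵥ (P *ᵥ x)) - σ * (x ⬝ᵥ (P *ᵥ x))) ∧
    (-(lminQ - 2 * σ * lmaxP) * ‖x‖ ^ 2 + σ * (x ⬝ᵥ (P *ᵥ x)) - σ * (x ⬝ᵥ (P *ᵥ x))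
        ≤ -(lminQ - 2 * σ * lmaxP) * ‖x‖ ^ 2) ∧
    (σ < lminQ / (2 * lmaxP) → x ≠ 0 → Vdot < 0) :=
  safety_gate_decay_bound_general B K P Q hP hQ σ hσ x e u usafe htrig hgate
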